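/- Let g be a positive definite symmetric real n×n matrix with Iwasawa decomposition g = n a k, where n is upper triangular unipotent, a diagonal with positive entries, and k orthogonal. Then for every orthogonal matrix u and every 1 ≤ r ≤ n, the determinant of the top-left r×r submatrix of κ(u⁻¹ g u) is strictly positive, where κ denotes the Iwasawa projection to the orthogonal factor. -/

import Mathlib

open Matrix

/-- The determinant of the top-left `r × r` submatrix of `B`. -/
def leadMinor {n : ℕ} (B : Matrix (Fin n) (Fin n) ℝ) (r : ℕ) (h : r ≤ n) : ℝ :=
  (B.submatrix (Fin.castLE h) (Fin.castLE h)).det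

/-! With `M = uᵀ g u` positive definite and `B = N' a'` upper triangular with positive diagonal,
`M = B k'` gives `k'ᵀ = M⁻¹ B`. Because `B` is upper triangular, the leading `r × r` block of
`M⁻¹ B` is the product of the leading blocks of `M⁻¹` and `B`: the first is a principal
submatrix of the positive definite `M⁻¹`, the second has the positive diagonal of `B`. -/

namespace Matrix

variable {n r : ℕ}

theorem submatrix_castLE_mul_of_isUpperTriangular {R : Type*} [CommSemiring R] (h : r ≤ n)
    (A : Matrix (Fin n) (Fin n) R) {B : Matrix (Fin n) (Fin n) R} (hB : B.IsUpperTriangular) :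
    (A * B).submatrix (Fin.castLE h) (Fin.castLE h) =
      A.submatrix (Fin.castLE h) (Fin.castLE h) * B.submatrix (Fin.castLE h) (Fin.castLE h) := by
  ext i j
  refine (Fintype.sum_of_injective _ (Fin.castLE_injective h) _ _ (fun p hp => ?_)
    fun _ => rfl).symm
  have hrp : r ≤ p := by
    contrapose! hp
    exact ⟨⟨p, hp⟩, rfl⟩
  have hjp : Fin.castLE h j < p := Fin.lt_def.mpr (by rw [Fin.val_castLE]; omega)
  exact mul_eq_zero_of_right _ (hB hjp)

theorem leadMinor_transpose (B : Matrix (Fin n) (Fin n) ℝ) (h : r ≤ n) :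
    leadMinor Bᵀ r h = leadMinor B r h := by
  rw [leadMinor, ← transpose_submatrix, det_transpose, leadMinor]

theorem leadMinor_mul_of_isUpperTriangular (h : r ≤ n) (A : Matrix (Fin n) (Fin n) ℝ)
    {B : Matrix (Fin n) (Fin n) ℝ} (hB : B.IsUpperTriangular) :
    leadMinor (A * B) r h = leadMinor A r h * leadMinor B r h := by
  rw [leadMinor, submatrix_castLE_mul_of_isUpperTriangular h A hB, det_mul, leadMinor, leadMinor]

theorem PosDef.leadMinor_pos {M : Matrix (Fin n) (Fin n) ℝ} (hM : M.PosDef) (h : r ≤ n) :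
    0 < leadMinor M r h :=
  (hM.submatrix (Fin.castLE_injective h)).det_pos

theorem IsUpperTriangular.leadMinor_pos {B : Matrix (Fin n) (Fin n) ℝ} (hB : B.IsUpperTriangular)
    (hdiag : ∀ i, 0 < B i i) (h : r ≤ n) : 0 < leadMinor B r h := by
  rw [leadMinor, det_of_isUpperTriangular (hB.submatrix (f := Fin.castLE h))]
  exact Finset.prod_pos fun i _ => hdiag _

theorem PosDef.transpose_mul_mul_of_orthogonal {g u : Matrix (Fin n) (Fin n) ℝ} (hg : g.PosDef)
    (hu : uᵀ * u = 1) : (uᵀ * g * u).PosDef := by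
  have hinj : Function.Injective u.mulVec := fun x y hxy => by
    simpa [mulVec_mulVec, hu] using congrArg (uᵀ *ᵥ ·) hxy
  simpa [conjTranspose_eq_transpose_of_trivial] using hg.conjTranspose_mul_mul_same hinj

end Matrix

theorem leadMinor_pos_of_posDef_eq_mul {n : ℕ} {M B k : Matrix (Fin n) (Fin n) ℝ} (hM : M.PosDef)
    (hB : B.IsUpperTriangular) (hBdiag : ∀ i, 0 < B i i) (hk : kᵀ * k = 1) (hMBk : M = B * k)
    {r : ℕ} (h : r ≤ n) : 0 < leadMinor k r h := by
  have := hM.isUnit.invertible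
  have hkT : kᵀ = M⁻¹ * B := by
    rw [eq_comm, inv_mul_eq_iff_eq_mul_of_invertible, hMBk, mul_assoc, mul_eq_one_comm.mp hk,
      mul_one]
  rw [← leadMinor_transpose, hkT, leadMinor_mul_of_isUpperTriangular h _ hB]
  exact mul_pos (hM.inv.leadMinor_pos h) (hB.leadMinor_pos hBdiag h)

theorem stmt19_general {n : ℕ} (g : Matrix (Fin n) (Fin n) ℝ)
    (hg : g.PosDef) :
    ∀ u : Matrix (Fin n) (Fin n) ℝ, uᵀ * u = 1 →
      ∀ N' a' k' : Matrix (Fin n) (Fin n) ℝ,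
        N'.BlockTriangular id → (∀ i, N' i i = 1) →
        (∃ d : Fin n → ℝ, (∀ i, 0 < d i) ∧ a' = diagonal d) →
        k'ᵀ * k' = 1 → u⁻¹ * g * u = N' * a' * k' →
        ∀ r : ℕ, 1 ≤ r → ∀ h : r ≤ n, 0 < leadMinor k' r h := by
  rintro u hu N' a' k' hN' hN'diag ⟨d, hd, rfl⟩ hk' hdec r - h
  rw [inv_eq_left_inv hu] at hdec
  refine leadMinor_pos_of_posDef_eq_mul (hg.transpose_mul_mul_of_orthogonal hu)
    (hN'.mul (blockTriangular_diagonal d)) (fun i => ?_) hk' hdec h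
  simpa only [mul_diagonal, hN'diag, one_mul] using hd i

theorem stmt19 {n : ℕ} (g N a k : Matrix (Fin n) (Fin n) ℝ)
    (hg : g.PosDef)
    (hN : N.BlockTriangular id) (hN1 : ∀ i, N i i = 1)
    (ha : ∃ d : Fin n → ℝ, (∀ i, 0 < d i) ∧ a = diagonal d)
    (hk : kᵀ * k = 1) (hdec : g = N * a * k) :
    ∀ u : Matrix (Fin n) (Fin n) ℝ, uᵀ * u = 1 →
      ∀ N' a' k' : Matrix (Fin n) (Fin n) ℝ,
        N'.BlockTriangular id → (∀ i, N' i i = 1) →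
        (∃ d : Fin n → ℝ, (∀ i, 0 < d i) ∧ a' = diagonal d) →
        k'ᵀ * k' = 1 → u⁻¹ * g * u = N' * a' * k' →
        ∀ r : ℕ, 1 ≤ r → ∀ h : r ≤ n, 0 < leadMinor k' r h :=
  stmt19_general g hg
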